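/- Let Φ(a) = γ([a, ∞)) where γ is the standard one-dimensional Gaussian measure on ℝ, and let Φ_dis(a) = 2·Φ(a)·Φ(−a). Let D be a probability measure on ℝ^d with x ≠ 0 D-almost surely, and let w ∈ ℝ^d. Then the expected disagreement of the Gaussian posterior Q_w = N(w, I_d) over linear classifiers satisfies: E_{x∼D} P_{(w',w'')∼N(w,I_d)⊗N(w,I_d)}( sgn(w'·x) ≠ sgn(w''·x) ) = E_{x∼D} Φ_dis( (w·x)/‖x‖ ). -/

import Mathlib

/-!
STATEMENT 18: Expected disagreement of the Gaussian posterior over linear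
classifiers equals the expected `Φ_dis`-loss:
`E_{x∼D} P_{(w',w'')∼N(w,I_d)⊗N(w,I_d)}(sgn(w'·x) ≠ sgn(w''·x))
  = E_{x∼D} Φ_dis((w·x)/‖x‖)` with `Φ_dis(a) = 2 Φ(a) Φ(-a)`.
`ℝ^d` is `Fin d → ℝ`; `Φ(a) = γ([a,∞))` is the standard Gaussian tail function.
-/

open MeasureTheory ProbabilityTheory Real
open scoped ENNReal Classical

noncomputable section

/-- Dot product on `ℝ^d`. -/
def dot {d : ℕ} (w x : Fin d → ℝ) : ℝ := ∑ i, w i * x i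

/-- Euclidean norm on `ℝ^d`. -/
def enorm' {d : ℕ} (x : Fin d → ℝ) : ℝ := Real.sqrt (∑ i, x i ^ 2)

/-- Sign, as a Boolean label (`true ↔ +1`). -/
def linSgn (t : ℝ) : Bool := decide (0 < t)

/-- The Gaussian measure `N(w, I_d)` on `ℝ^d`. -/
def gaussPi {d : ℕ} (w : Fin d → ℝ) : Measure (Fin d → ℝ) :=
  Measure.pi fun i => gaussianReal (w i) 1

/-- The standard Gaussian tail function `Φ(a) = γ([a,∞))`. -/
def gaussTail (a : ℝ) : ℝ := (gaussianReal 0 1 (Set.Ici a)).toReal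

/-! For `x ≠ 0` the coordinates of `w' ∼ N(w, I_d)` are independent Gaussians, so
`w' · x ∼ N(w · x, ‖x‖²)` and, with `a = (w · x) / ‖x‖`, the label `sgn(w' · x)` is `+1`
with probability `Φ(-a)` and `-1` with probability `Φ(a)`. Two independent draws disagree
with probability `Φ(-a) Φ(a) + Φ(a) Φ(-a)`. -/

open scoped NNReal

lemma gaussianReal_map_finsetSum_of_iIndepFun {ι Ω : Type*} {mΩ : MeasurableSpace Ω}
    {P : Measure Ω} [IsProbabilityMeasure P] {X : ι → Ω → ℝ} (hX : iIndepFun X P)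
    (hXm : ∀ i, Measurable (X i)) {m : ι → ℝ} {v : ι → ℝ≥0}
    (hlaw : ∀ i, P.map (X i) = gaussianReal (m i) (v i)) (s : Finset ι) :
    P.map (∑ i ∈ s, X i) = gaussianReal (∑ i ∈ s, m i) (∑ i ∈ s, v i) := by
  classical
  induction s using Finset.induction_on with
  | empty => simp [Pi.zero_def]
  | insert a s ha ih =>
    rw [Finset.sum_insert ha, Finset.sum_insert ha, Finset.sum_insert ha, add_comm (X a),
      add_comm (m a), add_comm (v a)]
    exact gaussianReal_add_gaussianReal_of_indepFun
      (hX.indepFun_finsetSum_of_notMem hXm ha) ih (hlaw a)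

lemma gaussianReal_sq_eq_map_mul_add (m c : ℝ) :
    gaussianReal m (.mk (c ^ 2) (sq_nonneg c)) = (gaussianReal 0 1).map (fun z => c * z + m) := by
  have hcomp : (fun z => c * z + m) = (· + m) ∘ (c * ·) := rfl
  rw [hcomp, ← Measure.map_map (measurable_add_const m) (measurable_const_mul c),
    gaussianReal_map_const_mul, gaussianReal_map_add_const, mul_zero, zero_add, mul_one]

lemma gaussianReal_Ioi_zero (m : ℝ) {σ : ℝ} (hσ : 0 < σ) :
    gaussianReal m (.mk (σ ^ 2) (sq_nonneg σ)) (Set.Ioi 0)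
      = gaussianReal 0 1 (Set.Ici (-(m / σ))) := by
  have hpre : (fun z => σ * z + m) ⁻¹' Set.Ioi 0 = Set.Ioi (-(m / σ)) := by
    ext z
    simp only [Set.mem_preimage, Set.mem_Ioi, ← neg_div, div_lt_iff₀ hσ]
    constructor <;> intro h <;> linarith
  have := nullSingletonClass_gaussianReal (μ := 0) (v := 1) one_ne_zero
  rw [gaussianReal_sq_eq_map_mul_add, Measure.map_apply (by fun_prop) measurableSet_Ioi, hpre]
  exact measure_congr Ioi_ae_eq_Ici

lemma gaussianReal_Iic_zero (m : ℝ) {σ : ℝ} (hσ : 0 < σ) :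
    gaussianReal m (.mk (σ ^ 2) (sq_nonneg σ)) (Set.Iic 0)
      = gaussianReal 0 1 (Set.Ici (m / σ)) := by
  have hpre : (fun z => -σ * z + m) ⁻¹' Set.Iic 0 = Set.Ici (m / σ) := by
    ext z
    simp only [Set.mem_preimage, Set.mem_Iic, Set.mem_Ici, div_le_iff₀ hσ]
    constructor <;> intro h <;> linarith
  have hsq : (.mk (σ ^ 2) (sq_nonneg σ) : ℝ≥0) = .mk ((-σ) ^ 2) (sq_nonneg (-σ)) := by simp
  rw [hsq, gaussianReal_sq_eq_map_mul_add, Measure.map_apply (by fun_prop) measurableSet_Iic,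
    hpre]

lemma MeasureTheory.Measure.prod_self_setOf_ne {α : Type*} [MeasurableSpace α] (μ : Measure α)
    [SFinite μ] {f : α → Bool} (hf : Measurable f) :
    (μ.prod μ) {p | f p.1 ≠ f p.2} = 2 * μ {a | f a} * μ {a | f a = false} := by
  have hset : {p : α × α | f p.1 ≠ f p.2}
      = {a | f a} ×ˢ {a | f a = false} ∪ {a | f a = false} ×ˢ {a | f a} := by
    ext ⟨a, b⟩
    simp only [Set.mem_ofPred_eq, Set.mem_union, Set.mem_prod]
    cases f a <;> cases f b <;> decide
  have hdisj : Disjoint ({a | f a} ×ˢ {a | f a = false}) ({a | f a = false} ×ˢ {a | f a}) :=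
    Set.disjoint_left.2 fun p hp hp' => by simp_all
  rw [hset, measure_union hdisj ((hf (measurableSet_singleton _)).prod
    (hf (measurableSet_singleton _))), Measure.prod_prod, Measure.prod_prod, two_mul, add_mul,
    mul_comm (μ {a | f a = false})]

instance {d : ℕ} (w : Fin d → ℝ) : IsProbabilityMeasure (gaussPi w) := by
  unfold gaussPi; infer_instance

lemma enorm'_pos {d : ℕ} {x : Fin d → ℝ} (hx : x ≠ 0) : 0 < enorm' x := by
  obtain ⟨i, hi⟩ := Function.ne_iff.1 hx
  exact Real.sqrt_pos.2 (Finset.sum_pos' (fun j _ => sq_nonneg (x j))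
    ⟨i, Finset.mem_univ i, pow_pos (abs_pos.2 hi) 2 |>.trans_eq (sq_abs _)⟩)

lemma measurable_dot_left {d : ℕ} (x : Fin d → ℝ) : Measurable fun y => dot y x := by
  unfold dot; fun_prop

lemma gaussPi_map_dot {d : ℕ} (w x : Fin d → ℝ) :
    (gaussPi w).map (fun y => dot y x)
      = gaussianReal (dot w x) (.mk (enorm' x ^ 2) (sq_nonneg _)) := by
  have hsum : (fun y => dot y x) = ∑ i, fun y : Fin d → ℝ => y i * x i := by
    ext y; simp [dot, Finset.sum_apply]
  have hindep : iIndepFun (fun i (y : Fin d → ℝ) => y i * x i) (gaussPi w) :=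
    iIndepFun_pi (X := fun i t => t * x i) fun i => by fun_prop
  have hlaw (i : Fin d) : (gaussPi w).map (fun y => y i * x i)
      = gaussianReal (x i * w i) (.mk (x i ^ 2) (sq_nonneg _) * 1) := by
    have heval : (gaussPi w).map (fun y => y i) = gaussianReal (w i) 1 :=
      (measurePreserving_eval (fun j => gaussianReal (w j) 1) i).map_eq
    rw [← gaussianReal_map_mul_const, ← heval, Measure.map_map (by fun_prop) (by fun_prop)]
    rfl
  rw [hsum, gaussianReal_map_finsetSum_of_iIndepFun hindep (fun i => by fun_prop) hlaw]
  congr 1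
  · simp [dot, mul_comm]
  · ext
    simp [enorm', Real.sq_sqrt (Finset.sum_nonneg fun i _ => sq_nonneg (x i))]

lemma gaussPi_prod_disagreement {d : ℕ} (w : Fin d → ℝ) {x : Fin d → ℝ} (hx : x ≠ 0) :
    ((gaussPi w).prod (gaussPi w)) {p | linSgn (dot p.1 x) ≠ linSgn (dot p.2 x)}
      = 2 * gaussianReal 0 1 (Set.Ici (-(dot w x / enorm' x)))
          * gaussianReal 0 1 (Set.Ici (dot w x / enorm' x)) := by
  have hpos : {y | linSgn (dot y x)} = (fun y => dot y x) ⁻¹' Set.Ioi 0 := by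
    ext; simp [linSgn]
  have hnonpos : {y | linSgn (dot y x) = false} = (fun y => dot y x) ⁻¹' Set.Iic 0 := by
    ext; simp [linSgn]
  have hmeas : Measurable fun y => linSgn (dot y x) :=
    measurable_to_bool ((measurable_dot_left x) measurableSet_Ioi |>.congr hpos.symm)
  rw [Measure.prod_self_setOf_ne _ hmeas, hpos, hnonpos,
    ← Measure.map_apply (measurable_dot_left x) measurableSet_Ioi,
    ← Measure.map_apply (measurable_dot_left x) measurableSet_Iic, gaussPi_map_dot,
    gaussianReal_Ioi_zero _ (enorm'_pos hx), gaussianReal_Iic_zero _ (enorm'_pos hx)]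

theorem disagreement_eq_phi_dis_general
    {d : ℕ}
    (D : Measure (Fin d → ℝ))
    (h0 : ∀ᵐ x ∂D, x ≠ 0)
    (w : Fin d → ℝ) :
    ∫ x, (((gaussPi w).prod (gaussPi w))
        {p | linSgn (dot p.1 x) ≠ linSgn (dot p.2 x)}).toReal ∂D
      = ∫ x, 2 * gaussTail (dot w x / enorm' x) * gaussTail (-(dot w x / enorm' x)) ∂D := by
  refine integral_congr_ae ?_
  filter_upwards [h0] with x hx
  rw [gaussPi_prod_disagreement w hx, ENNReal.toReal_mul, ENNReal.toReal_mul, gaussTail,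
    gaussTail, ENNReal.toReal_ofNat, mul_right_comm]

theorem disagreement_eq_phi_dis
    {d : ℕ}
    (D : Measure (Fin d → ℝ)) [IsProbabilityMeasure D]
    (h0 : ∀ᵐ x ∂D, x ≠ 0)
    (w : Fin d → ℝ) :
    ∫ x, (((gaussPi w).prod (gaussPi w))
        {p | linSgn (dot p.1 x) ≠ linSgn (dot p.2 x)}).toReal ∂D
      = ∫ x, 2 * gaussTail (dot w x / enorm' x) * gaussTail (-(dot w x / enorm' x)) ∂D :=
  disagreement_eq_phi_dis_general D h0 w
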